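/- arXiv:gr-qc/9904062 — 6 statements merged into one kernel-verified Lean document; each statement's English description precedes it below -/
import Mathlib

section
/- Let t_l be nonnegative reals and define lambda(varpi, m) = sum over l from m to varpi of C(varpi - m, varpi - l) * t_l. Then for m <= varpi and q with t_l = (p/(1-p))^l, one has lambda(varpi, m)/lambda(n, 0) = p^m * (1-p)^(n - varpi) for 0 < p < 1 and varpi <= n. -/
/-!
With `t l = s ^ l`, the weight `λ(ϖ, m)` is a binomial expansion and equals `s ^ m * (1 + s) ^ (ϖ - m)`.
For `s = p / (1 - p)` one has `1 + s = (1 - p)⁻¹`, so the ratio collapses to `p ^ m * (1 - p) ^ (n - ϖ)`.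
-/

open Finset

theorem sum_Icc_choose_mul_pow {R : Type*} [CommSemiring R] (s : R) {m v : ℕ} (h : m ≤ v) :
    ∑ l ∈ Icc m v, ((v - m).choose (v - l) : R) * s ^ l = s ^ m * (1 + s) ^ (v - m) := by
  obtain ⟨k, rfl⟩ := Nat.exists_eq_add_of_le h
  rw [← Ico_add_one_right_eq_Icc, sum_Ico_eq_sum_range, Nat.add_sub_cancel_left,
    show m + k + 1 - m = k + 1 by omega, add_comm 1 s, add_pow, mul_sum]
  refine sum_congr rfl fun j hj => ?_
  rw [show m + k - (m + j) = k - j by omega,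
    Nat.choose_symm (Nat.le_of_lt_succ (mem_range.mp hj)), pow_add]
  ring

theorem one_add_div_one_sub {K : Type*} [Field K] {p : K} (hp : p ≠ 1) :
    1 + p / (1 - p) = (1 - p)⁻¹ := by
  have : 1 - p ≠ 0 := sub_ne_zero.mpr hp.symm
  field_simp
  ring

theorem stmt4_general (p : ℝ) (hp1 : p < 1) (m varpi n : ℕ)
    (hm : m ≤ varpi) (hv : varpi ≤ n) (t : ℕ → ℝ)
    (ht : ∀ l, t l = (p / (1 - p)) ^ l) :
    (∑ l ∈ Finset.Icc m varpi, ((varpi - m).choose (varpi - l) : ℝ) * t l) /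
      (∑ l ∈ Finset.Icc 0 n, ((n - 0).choose (n - l) : ℝ) * t l)
      = p ^ m * (1 - p) ^ (n - varpi) := by
  have hq : 1 - p ≠ 0 := by linarith
  have hsplit : (1 - p) ^ n = (1 - p) ^ (n - varpi) * (1 - p) ^ (varpi - m) * (1 - p) ^ m := by
    rw [← pow_add, ← pow_add]
    congr 1
    omega
  simp only [ht]
  rw [sum_Icc_choose_mul_pow _ hm, sum_Icc_choose_mul_pow _ n.zero_le,
    one_add_div_one_sub hp1.ne, div_pow, inv_pow, inv_pow, pow_zero, one_mul, Nat.sub_zero]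
  field_simp
  rw [hsplit]
  ring

theorem stmt4 (p : ℝ) (hp0 : 0 < p) (hp1 : p < 1) (m varpi n : ℕ)
    (hm : m ≤ varpi) (hv : varpi ≤ n) (t : ℕ → ℝ)
    (ht : ∀ l, t l = (p / (1 - p)) ^ l) :
    (∑ l ∈ Finset.Icc m varpi, ((varpi - m).choose (varpi - l) : ℝ) * t l) /
      (∑ l ∈ Finset.Icc 0 n, ((n - 0).choose (n - l) : ℝ) * t l)
      = p ^ m * (1 - p) ^ (n - varpi) :=
  stmt4_general p hp1 m varpi n hm hv t ht
end

section
/- Define, for a sequence of positive reals q_0 = 1, q_1, q_2, ..., the quantities T(n,m) = sum over k from 0 to m of (-1)^k * C(m,k) * (1/q_{n-k}) for m <= n. If T(n,n) >= 0 for all n (with T(0,0) = 1), then T(n,m) >= 0 for all m <= n. -/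
open Finset

/-- `T q n m = ∑_{k=0}^m (-1)^k C(m,k) / q_{n-k}`. -/
noncomputable def T (q : ℕ → ℝ) (n m : ℕ) : ℝ :=
  ∑ k ∈ range (m + 1), (-1 : ℝ) ^ k * (m.choose k) * (1 / q (n - k))

/-!
Pascal's rule `C(m+1,k+1) = C(m,k) + C(m,k+1)` gives `T(n+1, m) = T(n+1, m+1) + T(n, m)`.
So nonnegativity spreads from the diagonal: by induction on `n`, and for fixed `n + 1` by
downward induction on `m` starting at `m = n + 1`.
-/

theorem sum_range_succ_neg_one_pow_mul_choose_succ {R : Type*} [CommRing R] (a : ℕ → R)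
    (m : ℕ) :
    ∑ k ∈ range (m + 1 + 1), (-1) ^ k * ((m + 1).choose k : R) * a k =
      ∑ k ∈ range (m + 1), (-1) ^ k * (m.choose k : R) * (a k - a (k + 1)) := by
  have hshift : ∑ k ∈ range (m + 1), (-1) ^ k * (m.choose k : R) * a k =
      a 0 + ∑ k ∈ range (m + 1), (-1) ^ (k + 1) * (m.choose (k + 1) : R) * a (k + 1) := by
    calc ∑ k ∈ range (m + 1), (-1) ^ k * (m.choose k : R) * a k
        = ∑ k ∈ range (m + 1 + 1), (-1) ^ k * (m.choose k : R) * a k := by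
          simp [sum_range_succ _ (m + 1)]
      _ = _ := by rw [sum_range_succ', add_comm]; simp
  simp only [mul_sub, sum_sub_distrib, hshift, sum_range_succ' _ (m + 1), Nat.choose_succ_succ',
    Nat.cast_add, Nat.choose_zero_right, pow_succ, pow_zero, Nat.cast_one, mul_add, add_mul,
    sum_add_distrib, mul_neg_one, neg_mul, sum_neg_distrib]
  ring

theorem T_succ_right (q : ℕ → ℝ) (n m : ℕ) : T q n (m + 1) = T q n m - T q (n - 1) m := by
  simp only [T, sum_range_succ_neg_one_pow_mul_choose_succ, mul_sub, sum_sub_distrib, Nat.sub_sub,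
    add_comm 1]

theorem nonneg_of_diag_nonneg_of_pascal {α : Type*} [AddCommMonoid α] [PartialOrder α]
    [IsOrderedAddMonoid α] {f : ℕ → ℕ → α}
    (hpascal : ∀ n m, f (n + 1) m = f (n + 1) (m + 1) + f n m)
    (hdiag : ∀ n, 0 ≤ f n n) : ∀ n m, m ≤ n → 0 ≤ f n m := by
  intro n
  induction n with
  | zero => intro m hm; rw [Nat.le_zero.mp hm]; exact hdiag 0
  | succ n ih =>
    intro m hm
    induction hm using Nat.decreasingInduction with
    | self => exact hdiag (n + 1)
    | of_succ k hk hnext => rw [hpascal]; exact add_nonneg hnext (ih k (Nat.le_of_lt_succ hk))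

theorem stmt6_general (q : ℕ → ℝ) (hdiag : ∀ n, 0 ≤ T q n n) :
    ∀ n m, m ≤ n → 0 ≤ T q n m :=
  nonneg_of_diag_nonneg_of_pascal (fun n m => by rw [T_succ_right, Nat.add_sub_cancel]; ring) hdiag

theorem stmt6 (q : ℕ → ℝ) (hq0 : q 0 = 1) (hqpos : ∀ n, 0 < q n)
    (hdiag : ∀ n, 0 ≤ T q n n) :
    ∀ n m, m ≤ n → 0 ≤ T q n m :=
  stmt6_general q hdiag
end

section
/- Let P be a finite poset with n elements. For every natural number l, the sum over all partial stems S of P (downward-closed finite subsets) of C(|S| - m(S), l - m(S)) equals C(n, l), where m(S) is the number of maximal elements of S and C(a,b) = 0 when b < 0 or b > a. -/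
open Finset

variable {α : Type*} [Fintype α] [PartialOrder α] [DecidableEq α]
  [DecidableRel ((· ≤ ·) : α → α → Prop)]

/-- `S` is a partial stem: a subset containing its own past. -/
def IsStem (S : Finset α) : Prop := ∀ x ∈ S, ∀ y, y ≤ x → y ∈ S

instance : DecidablePred (IsStem (α := α)) := fun S => by
  unfold IsStem; infer_instance

/-- The number of maximal elements of the subset `S`. -/
def maxCard (S : Finset α) : ℕ :=
  (S.filter (fun x => ∀ y ∈ S, x ≤ y → y ≤ x)).card

/-- Down-closure of a finite set. -/
def dc (T : Finset α) : Finset α := Finset.univ.filter (fun y => ∃ x ∈ T, y ≤ x)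

omit [DecidableEq α] in
lemma dc_isStem (T : Finset α) : IsStem (dc T) := by
  intro x hx y hyx
  simp only [dc, mem_filter, mem_univ, true_and] at hx ⊢
  obtain ⟨z, hz, hxz⟩ := hx
  exact ⟨z, hz, le_trans hyx hxz⟩

lemma mem_maxSet_mem {S : Finset α} {x : α}
    (hx : x ∈ S.filter (fun x => ∀ y ∈ S, x ≤ y → y ≤ x)) : x ∈ S :=
  (mem_filter.mp hx).1

lemma exists_le_max {S : Finset α} {x : α} (hx : x ∈ S) :
    ∃ b ∈ S.filter (fun x => ∀ y ∈ S, x ≤ y → y ≤ x), x ≤ b := by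
  obtain ⟨b, hxb, hbS, hbmax⟩ := Finite.exists_le_maximal (p := (· ∈ S)) hx
  exact ⟨b, mem_filter.mpr ⟨hbS, fun y hy hby => hbmax hy hby⟩, hxb⟩

lemma dc_eq_iff {S T : Finset α} (hS : IsStem S) :
    dc T = S ↔ (S.filter (fun x => ∀ y ∈ S, x ≤ y → y ≤ x)) ⊆ T ∧ T ⊆ S := by
  constructor
  · rintro rfl
    constructor
    · intro x hx
      have hxd := mem_maxSet_mem hx
      have hmax := (mem_filter.mp hx).2
      simp only [dc, mem_filter, mem_univ, true_and] at hxd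
      obtain ⟨t, htT, hxt⟩ := hxd
      have htd : t ∈ dc T := by
        simp only [dc, mem_filter, mem_univ, true_and]; exact ⟨t, htT, le_rfl⟩
      have := hmax t htd hxt
      rwa [le_antisymm hxt this]
    · intro t htT
      simp only [dc, mem_filter, mem_univ, true_and]
      exact ⟨t, htT, le_rfl⟩
  · rintro ⟨hMT, hTS⟩
    ext y
    simp only [dc, mem_filter, mem_univ, true_and]
    constructor
    · rintro ⟨x, hxT, hyx⟩
      exact hS x (hTS hxT) y hyx
    · intro hyS
      obtain ⟨b, hb, hyb⟩ := exists_le_max hyS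
      exact ⟨b, hMT hb, hyb⟩

theorem stmt8 (l : ℕ) :
    ∑ S ∈ Finset.univ.filter (fun S : Finset α => IsStem S),
        (if maxCard S ≤ l then (S.card - maxCard S).choose (l - maxCard S) else 0)
      = (Fintype.card α).choose l := by
  classical
  rw [← card_univ, ← Finset.card_powersetCard l (Finset.univ : Finset α),
    Finset.card_eq_sum_card_fiberwise (f := dc)
      (t := Finset.univ.filter (fun S : Finset α => IsStem S))
      (fun T _ => mem_filter.mpr ⟨mem_univ _, dc_isStem T⟩)]
  apply Finset.sum_congr rfl
  intro S hS
  have hstem : IsStem S := (mem_filter.mp hS).2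
  set M := S.filter (fun x => ∀ y ∈ S, x ≤ y → y ≤ x) with hM
  have hMS : M ⊆ S := filter_subset _ _
  -- fiber = {T : M ⊆ T ⊆ S, |T| = l}
  have hfiber : (Finset.univ.powersetCard l).filter (fun T => dc T = S)
      = (S.powersetCard l).filter (fun T => M ⊆ T) := by
    ext T
    simp only [mem_filter, mem_powersetCard, subset_univ, true_and, dc_eq_iff hstem]
    tauto
  rw [hfiber]
  -- count via bijection T ↦ T \ M with powersetCard (l - maxCard S) (S \ M)
  by_cases hml : maxCard S ≤ l
  · rw [if_pos hml]
    have : ((S.powersetCard l).filter (fun T => M ⊆ T)).card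
        = ((S \ M).powersetCard (l - maxCard S)).card := by
      apply Finset.card_bij (fun T _ => T \ M)
      · intro T hT
        simp only [mem_filter, mem_powersetCard] at hT
        obtain ⟨⟨hTS, hTl⟩, hMT⟩ := hT
        rw [mem_powersetCard]
        constructor
        · exact sdiff_subset_sdiff hTS Subset.rfl
        · rw [card_sdiff_of_subset hMT, hTl]; rfl
      · intro T₁ h₁ T₂ h₂ heq
        simp only [mem_filter, mem_powersetCard] at h₁ h₂
        have e1 : T₁ = (T₁ \ M) ∪ M := by
          rw [sdiff_union_self_eq_union, union_eq_left.mpr h₁.2]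
        have e2 : T₂ = (T₂ \ M) ∪ M := by
          rw [sdiff_union_self_eq_union, union_eq_left.mpr h₂.2]
        rw [e1, e2, heq]
      · intro T' hT'
        rw [mem_powersetCard] at hT'
        refine ⟨T' ∪ M, ?_, ?_⟩
        · simp only [mem_filter, mem_powersetCard]
          refine ⟨⟨union_subset (hT'.1.trans (sdiff_subset)) hMS, ?_⟩, subset_union_right⟩
          rw [card_union_of_disjoint, hT'.2]
          · have : maxCard S = M.card := rfl
            omega
          · exact Finset.disjoint_left.mpr (fun a ha => (Finset.mem_sdiff.mp (hT'.1 ha)).2)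
        · rw [union_sdiff_right, sdiff_eq_self_of_disjoint]
          exact Finset.disjoint_left.mpr (fun a ha => (Finset.mem_sdiff.mp (hT'.1 ha)).2)
    rw [this, Finset.card_powersetCard, card_sdiff_of_subset hMS]
    rfl
  · rw [if_neg hml]
    symm; rw [Finset.card_eq_zero, Finset.filter_eq_empty_iff]
    intro T hT
    rw [mem_powersetCard] at hT
    intro hMT
    have := card_le_card hMT
    have : maxCard S = M.card := rfl
    omega
end

section
/- Let P be a finite poset with n elements and l a natural number with exactly one maximal-element count considered: the number of l-element subsets of P having exactly j maximal elements equals the sum over partial stems S of P with m(S) = j of C(|S| - j, l - j). -/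
open Finset

variable {α : Type*} [Fintype α] [PartialOrder α] [DecidableEq α]
  [DecidableRel ((· ≤ ·) : α → α → Prop)]

namespace Stmt10Aux

variable {α : Type*} [Fintype α] [PartialOrder α] [DecidableEq α]
  [DecidableRel ((· ≤ ·) : α → α → Prop)]

/-- The set of maximal elements of `T`. -/
def M (T : Finset α) : Finset α := T.filter (fun x => ∀ y ∈ T, x ≤ y → y ≤ x)

lemma maxCard_eq (T : Finset α) : maxCard T = (M T).card := rfl

lemma M_subset (T : Finset α) : M T ⊆ T := filter_subset _ _

/-- The down-closure of the maximal elements of `T`. -/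
def D (T : Finset α) : Finset α := univ.filter (fun y => ∃ x ∈ M T, y ≤ x)

lemma exists_le_M {T : Finset α} {x : α} (hx : x ∈ T) : ∃ m ∈ M T, x ≤ m := by
  obtain ⟨m, hm, hmax⟩ := (T.filter (fun y => x ≤ y)).exists_maximal ⟨x, by simp [hx]⟩
  simp only [mem_filter] at hm
  refine ⟨m, ?_, hm.2⟩
  simp only [M, mem_filter]
  refine ⟨hm.1, fun y hy hmy => ?_⟩
  by_contra hym
  exact hym (hmax (by simp [hy, le_trans hm.2 hmy]) hmy)

lemma subset_D (T : Finset α) : T ⊆ D T := by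
  intro x hx
  obtain ⟨m, hm, hxm⟩ := exists_le_M hx
  simp only [D, mem_filter, mem_univ, true_and]
  exact ⟨m, hm, hxm⟩

lemma M_subset_D (T : Finset α) : M T ⊆ D T := (M_subset T).trans (subset_D T)

lemma M_D (T : Finset α) : M (D T) = M T := by
  ext z
  simp only [M, mem_filter]
  constructor
  · rintro ⟨hz, hmax⟩
    simp only [D, mem_filter, mem_univ, true_and] at hz
    obtain ⟨x, hx, hzx⟩ := hz
    have hxz : x ≤ z := hmax x (M_subset_D T hx) hzx
    have : z = x := le_antisymm hzx hxz
    subst this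
    simp only [M, mem_filter] at hx
    exact hx
  · rintro ⟨hz, hmax⟩
    refine ⟨subset_D T (M_subset T (show z ∈ M T from mem_filter.mpr ⟨hz, hmax⟩)), ?_⟩
    intro y hy hzy
    simp only [D, mem_filter, mem_univ, true_and] at hy
    obtain ⟨x, hx, hyx⟩ := hy
    have hzx : z ≤ x := hzy.trans hyx
    have hxz : x ≤ z := hmax x (M_subset T hx) hzx
    exact hyx.trans hxz

lemma D_isStem (T : Finset α) : IsStem (D T) := by
  intro x hx y hyx
  simp only [D, mem_filter, mem_univ, true_and] at hx ⊢
  obtain ⟨m, hm, hxm⟩ := hx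
  exact ⟨m, hm, hyx.trans hxm⟩

lemma D_of_stem {S : Finset α} (hS : IsStem S) : D S = S := by
  apply Subset.antisymm
  · intro y hy
    simp only [D, mem_filter, mem_univ, true_and] at hy
    obtain ⟨x, hx, hyx⟩ := hy
    exact hS x (M_subset S hx) y hyx
  · exact subset_D S

lemma M_union {S U : Finset α} (hS : IsStem S) (hU : U ⊆ S \ M S) :
    M (M S ∪ U) = M S := by
  have hTS : M S ∪ U ⊆ S := union_subset (M_subset S) (hU.trans (sdiff_subset))
  ext z
  constructor
  · intro hz
    rw [M, mem_filter] at hz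
    obtain ⟨hzT, hmax⟩ := hz
    obtain ⟨m, hm, hzm⟩ := exists_le_M (hTS hzT)
    have hmz : m ≤ z := hmax m (subset_union_left hm) hzm
    exact le_antisymm hzm hmz ▸ hm
  · intro hz
    have hzp : ∀ y ∈ S, z ≤ y → y ≤ z := (mem_filter.mp hz).2
    exact mem_filter.mpr ⟨subset_union_left hz, fun y hy hzy => hzp y (hTS hy) hzy⟩

lemma D_eq_of_M_eq {T T' : Finset α} (h : M T = M T') : D T = D T' := by
  simp only [D, h]

end Stmt10Aux

open Stmt10Aux in
theorem stmt10 (l j : ℕ) :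
    (Finset.univ.filter (fun T : Finset α => T.card = l ∧ maxCard T = j)).card
      = ∑ S ∈ Finset.univ.filter (fun S : Finset α => IsStem S ∧ maxCard S = j),
          (if j ≤ l then (S.card - j).choose (l - j) else 0) := by
  by_cases hjl : j ≤ l
  · simp only [if_pos hjl]
    rw [Finset.card_eq_sum_card_fiberwise (f := D)
      (t := Finset.univ.filter (fun S : Finset α => IsStem S ∧ maxCard S = j))]
    · apply Finset.sum_congr rfl
      intro S hS
      simp only [mem_filter, mem_univ, true_and] at hS
      obtain ⟨hstem, hmS⟩ := hS
      have hMS : (M S).card = j := hmS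
      have key : ∀ T : Finset α, T.card = l ∧ maxCard T = j → D T = S →
          M T = M S ∧ T ⊆ S := by
        intro T hT hDT
        have : M S = M T := by rw [← hDT, M_D]
        exact ⟨this.symm, hDT ▸ subset_D T⟩
      have hc : S.card - j = (S \ M S).card := by rw [card_sdiff_of_subset (M_subset S), hMS]
      rw [hc, ← Finset.card_powersetCard (l - j) (S \ M S)]
      apply Finset.card_bij (fun T _ => T \ M S)
      · intro T hT
        simp only [mem_filter, mem_univ, true_and] at hT
        obtain ⟨⟨hcard, hmax⟩, hDT⟩ := hT
        obtain ⟨hMT, hTS⟩ := key T ⟨hcard, hmax⟩ hDT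
        rw [mem_powersetCard]
        constructor
        · intro x hx
          rw [mem_sdiff] at hx ⊢
          exact ⟨hTS hx.1, hx.2⟩
        · rw [← hMT, card_sdiff_of_subset (hMT ▸ M_subset T), hcard, ← maxCard_eq, hmax]
      · intro T1 h1 T2 h2 heq
        simp only [mem_filter, mem_univ, true_and] at h1 h2
        obtain ⟨hM1, _⟩ := key T1 h1.1 h1.2
        obtain ⟨hM2, _⟩ := key T2 h2.1 h2.2
        have e1 : M S ∪ (T1 \ M S) = T1 := by
          rw [← hM1]; exact Finset.union_sdiff_of_subset (M_subset T1)
        have e2 : M S ∪ (T2 \ M S) = T2 := by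
          rw [← hM2]; exact Finset.union_sdiff_of_subset (M_subset T2)
        rw [← e1, ← e2, heq]
      · intro U hU
        rw [mem_powersetCard] at hU
        obtain ⟨hUsub, hUcard⟩ := hU
        refine ⟨M S ∪ U, ?_, ?_⟩
        · have hMU : M (M S ∪ U) = M S := M_union hstem hUsub
          have hdisj : Disjoint (M S) U := by
            rw [Finset.disjoint_left]
            intro a ha haU
            exact ((mem_sdiff.mp (hUsub haU)).2) ha
          simp only [mem_filter, mem_univ, true_and]
          refine ⟨⟨?_, ?_⟩, ?_⟩
          · rw [card_union_of_disjoint hdisj, hMS, hUcard]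
            omega
          · rw [maxCard_eq, hMU, hMS]
          · rw [D_eq_of_M_eq hMU, D_of_stem hstem]
        · rw [union_sdiff_cancel_left]
          rw [Finset.disjoint_left]
          intro a ha haU
          exact ((mem_sdiff.mp (hUsub haU)).2) ha
    · intro T hT
      simp only [mem_coe, mem_filter, mem_univ, true_and] at hT ⊢
      refine ⟨D_isStem T, ?_⟩
      rw [maxCard_eq, M_D, ← maxCard_eq, hT.2]
  · simp only [if_neg hjl, Finset.sum_const_zero]
    rw [Finset.card_eq_zero, Finset.filter_eq_empty_iff]
    intro T _
    rintro ⟨hcard, hmax⟩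
    apply hjl
    rw [← hcard, ← hmax, maxCard_eq]
    exact Finset.card_le_card (M_subset T)
end

section
/- In the general sequential growth dynamics, the probability P(C) assigned to a finite causet C, defined as the product over elements x of C of lambda(varpi(x), m(x)) divided by the product over j from 0 to |C|-1 of lambda(j, 0), equals the product of transition probabilities along any natural labeling of C; in particular this product is independent of the choice of natural labeling. -/
open Finset

variable {α : Type*} [Fintype α] [PartialOrder α] [DecidableEq α]
  [DecidableRel ((· ≤ ·) : α → α → Prop)]

/-- `lam t varpi m = ∑_{l=m}^{varpi} C(varpi-m, varpi-l) t_l`, the unnormalized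
weight of a birth whose precursor set has `varpi` elements and `m` maximal elements. -/
def lam (t : ℕ → ℝ) (varpi m : ℕ) : ℝ :=
  ∑ l ∈ Finset.Icc m varpi, ((varpi - m).choose (varpi - l) : ℝ) * t l

/-- The strict past of an element `x`. -/
def past (x : α) : Finset α := Finset.univ.filter (fun y => y ≤ x ∧ y ≠ x)

/-- `varpi x = |past x|`. -/
def varpi (x : α) : ℕ := (past x).card

/-- `mpast x` is the number of maximal elements of `past x`. -/
def mpast (x : α) : ℕ :=
  ((past x).filter (fun y => ∀ z ∈ past x, y ≤ z → z ≤ y)).card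

theorem stmt14 (t : ℕ → ℝ) (ht0 : t 0 = 1) (htnn : ∀ l, 0 ≤ t l)
    (ℓ : α ≃ Fin (Fintype.card α))
    (hℓ : ∀ x y : α, x < y → (ℓ x : ℕ) < (ℓ y : ℕ)) :
    ∏ x : α, lam t (varpi x) (mpast x) / lam t ((ℓ x : ℕ)) 0
      = (∏ x : α, lam t (varpi x) (mpast x)) /
          (∏ j ∈ Finset.range (Fintype.card α), lam t j 0) := by
  rw [Finset.prod_div_distrib]
  congr 1
  rw [← Fin.prod_univ_eq_prod_range (fun j => lam t j 0) (Fintype.card α)]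
  exact Equiv.prod_comp ℓ (fun j => lam t (j : ℕ) 0)
end

section
/- For the transitive percolation dynamics with parameter p (and q = 1 - p), the product of transition probabilities along any natural labeling of a finite poset C with n elements equals p^L * q^(C(n,2) - R), where L is the number of links (covering relations) of C and R is the total number of relations of C; in particular this product is independent of the labeling. -/
open Finset

variable {α : Type*} [Fintype α] [PartialOrder α] [DecidableEq α]
  [DecidableRel ((· ≤ ·) : α → α → Prop)]

/-- The number of links (covering relations) of the poset `α`. -/
def numLinks (α : Type*) [Fintype α] [PartialOrder α] [DecidableEq α]
    [DecidableRel ((· ≤ ·) : α → α → Prop)] : ℕ :=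
  (Finset.univ.filter (fun z : α × α =>
    (z.1 ≤ z.2 ∧ z.1 ≠ z.2) ∧ ∀ w, (z.1 ≤ w ∧ z.1 ≠ w) → (w ≤ z.2 ∧ w ≠ z.2) → False)).card

/-- The number of relations of the poset `α`. -/
def numRels (α : Type*) [Fintype α] [PartialOrder α] [DecidableEq α]
    [DecidableRel ((· ≤ ·) : α → α → Prop)] : ℕ :=
  (Finset.univ.filter (fun z : α × α => z.1 ≤ z.2 ∧ z.1 ≠ z.2)).card

/-! Label the elements `x₀, …, x_{n-1}` along the natural labeling. The factor contributed by `xᵢ`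
is `p ^ mpast xᵢ * q ^ (i - varpi xᵢ)`, so the product is `p ^ (∑ mpast) * q ^ (∑ i - ∑ varpi)`.
Counting pairs `(y, x)` by their upper element gives `∑ mpast = L` and `∑ varpi = R`, while the
labels run over `0, …, n - 1`, so `∑ i = C(n, 2)`. The subtraction may be distributed over the sum
because `varpi xᵢ ≤ i`: every element of the past of `xᵢ` carries a smaller label. -/

theorem card_filter_univ_prod_eq_sum {β γ : Type*} [Fintype β] [Fintype γ]
    (P : β × γ → Prop) [DecidablePred P] :
    #(univ.filter P) = ∑ c, #(univ.filter fun b => P (b, c)) := by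
  simp only [card_filter]
  rw [← univ_product_univ, sum_product_right]

theorem Equiv.sum_val_eq_choose_two {β : Type*} [Fintype β] (ℓ : β ≃ Fin (Fintype.card β)) :
    ∑ x, (ℓ x : ℕ) = (Fintype.card β).choose 2 := by
  rw [Nat.choose_two_right, ← sum_range_id, ← Fin.sum_univ_eq_sum_range (fun i => i)]
  exact ℓ.sum_comp (fun i => (i : ℕ))

theorem mem_past {x y : α} : y ∈ past x ↔ y < x := by
  simp [past, lt_iff_le_and_ne]

theorem varpi_le_label (ℓ : α ≃ Fin (Fintype.card α))
    (hℓ : ∀ x y : α, x < y → (ℓ x : ℕ) < (ℓ y : ℕ)) (x : α) :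
    varpi x ≤ ℓ x := by
  calc varpi x ≤ #(range (ℓ x : ℕ)) :=
        card_le_card_of_injOn (fun y => (ℓ y : ℕ))
          (fun y hy => mem_range.2 (hℓ y x (mem_past.1 hy)))
          (fun _ _ _ _ h => ℓ.injective (Fin.val_injective h))
    _ = ℓ x := card_range _

theorem numRels_eq_sum_varpi : numRels α = ∑ x : α, varpi x :=
  card_filter_univ_prod_eq_sum _

theorem filter_maximal_past_eq (x : α) :
    (past x).filter (fun y => ∀ z ∈ past x, y ≤ z → z ≤ y) =
      univ.filter (fun y => (y ≤ x ∧ y ≠ x) ∧ ∀ w, (y ≤ w ∧ y ≠ w) → (w ≤ x ∧ w ≠ x) → False) := by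
  ext y
  simp only [mem_filter, mem_univ, true_and, ← lt_iff_le_and_ne, mem_past]
  refine and_congr_right fun _ => ⟨fun h w hyw hwx => ?_, fun h z hzx hyz => ?_⟩
  · exact hyw.ne (le_antisymm hyw.le (h w hwx hyw.le))
  · by_contra hzy
    exact h z (lt_of_le_not_ge hyz hzy) hzx

theorem numLinks_eq_sum_mpast : numLinks α = ∑ x : α, mpast x := by
  rw [numLinks, card_filter_univ_prod_eq_sum]
  exact sum_congr rfl fun x _ => by rw [mpast, filter_maximal_past_eq]

theorem stmt15_general (p q : ℝ)
    (ℓ : α ≃ Fin (Fintype.card α))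
    (hℓ : ∀ x y : α, x < y → (ℓ x : ℕ) < (ℓ y : ℕ)) :
    ∏ x : α, p ^ mpast x * q ^ ((ℓ x : ℕ) - varpi x)
      = p ^ numLinks α * q ^ ((Fintype.card α).choose 2 - numRels α) := by
  rw [prod_mul_distrib, prod_pow_eq_pow_sum, prod_pow_eq_pow_sum, numLinks_eq_sum_mpast,
    sum_tsub_distrib univ (fun x _ => varpi_le_label ℓ hℓ x), ℓ.sum_val_eq_choose_two,
    numRels_eq_sum_varpi]

theorem stmt15 (p q : ℝ) (hp0 : 0 < p) (hp1 : p < 1) (hq : q = 1 - p)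
    (ℓ : α ≃ Fin (Fintype.card α))
    (hℓ : ∀ x y : α, x < y → (ℓ x : ℕ) < (ℓ y : ℕ)) :
    ∏ x : α, p ^ mpast x * q ^ ((ℓ x : ℕ) - varpi x)
      = p ^ numLinks α * q ^ ((Fintype.card α).choose 2 - numRels α) :=
  stmt15_general p q ℓ hℓ
end
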